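/- Let (A,b) ∈ ℂ^{n×n} × ℂⁿ be a reachable single-input pair and p a monic polynomial of degree n. Then the feedback vector f = (0,…,0,1) R(A,b)⁻¹ p(A), where R(A,b) = (b, Ab, …, A^{n−1}b) is the reachability matrix, satisfies det(zI − A + b f) = p(z) (Ackermann's formula). -/

import Mathlib

open Polynomial Matrix

/-
Let `w` be the last row of `R⁻¹`, so that `w Aᵏ b = δ_{k,n-1}` for `k < n`. For the closed loop
matrix `M = A - b φ` the rows `w Mᵏ` then agree with `w Aᵏ` for `k < n`, while `w Mⁿ = w Aⁿ - φ`;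
hence `w q(M) = w q(A) - q_n φ` for every `q` of degree at most `n`. Applied to `q = χ_M`
(Cayley–Hamilton) and to `q = p`, with `φ = w p(A)`, this gives `w (χ_M - p)(A) = 0`. Finally
`q ↦ w q(A)` is injective on polynomials of degree `< n`: for `q ≠ 0`, the shift
`h = X^(n-1-deg q) q` has degree `n - 1`, so `w h(A) b` is the leading coefficient of `q`.
-/

namespace Matrix

variable {K : Type*} [CommRing K] {n : ℕ} {A : Matrix (Fin n) (Fin n) K} {b w : Fin n → K}

theorem vecMul_pow_vecMul_sub_vecMulVec (φ : Fin n → K) (k : ℕ) :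
    w ᵥ* A ^ k ᵥ* (A - vecMulVec b φ) = w ᵥ* A ^ (k + 1) - (w ⬝ᵥ A ^ k *ᵥ b) • φ := by
  rw [vecMul_sub, vecMul_vecMulVec, vecMul_vecMul, ← pow_succ, dotProduct_mulVec]

variable (hw : ∀ k < n, w ⬝ᵥ A ^ k *ᵥ b = if k = n - 1 then 1 else 0)
include hw

theorem vecMul_pow_sub_vecMulVec_of_lt (φ : Fin n → K) {k : ℕ} (hk : k < n) :
    w ᵥ* (A - vecMulVec b φ) ^ k = w ᵥ* A ^ k := by
  induction k with
  | zero => simp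
  | succ k ih =>
    rw [pow_succ, ← vecMul_vecMul, ih (by omega), vecMul_pow_vecMul_sub_vecMulVec,
      hw k (by omega), if_neg (by omega), zero_smul, sub_zero]

theorem vecMul_pow_sub_vecMulVec_self (φ : Fin n → K) :
    w ᵥ* (A - vecMulVec b φ) ^ n = w ᵥ* A ^ n - φ := by
  cases n with
  | zero => exact Subsingleton.elim _ _
  | succ m =>
    rw [pow_succ, ← vecMul_vecMul, vecMul_pow_sub_vecMulVec_of_lt hw φ (by omega),
      vecMul_pow_vecMul_sub_vecMulVec, hw m (by omega), if_pos (by omega), one_smul]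

theorem vecMul_aeval_sub_vecMulVec (φ : Fin n → K) {q : K[X]} (hq : q.natDegree ≤ n) :
    w ᵥ* aeval (A - vecMulVec b φ) q = w ᵥ* aeval A q - q.coeff n • φ := by
  have hq' : q.natDegree < n + 1 := Nat.lt_succ_of_le hq
  simp only [aeval_eq_sum_range' hq', Finset.sum_range_succ, vecMul_add, vecMul_sum, vecMul_smul,
    vecMul_pow_sub_vecMulVec_self hw, smul_sub]
  rw [Finset.sum_congr rfl fun i hi =>
    congrArg _ (vecMul_pow_sub_vecMulVec_of_lt hw φ (Finset.mem_range.mp hi))]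
  abel

theorem dotProduct_aeval_mulVec {q : K[X]} (hq : q.natDegree < n) :
    w ⬝ᵥ aeval A q *ᵥ b = q.coeff (n - 1) := by
  simp only [aeval_eq_sum_range' hq, sum_mulVec, smul_mulVec, dotProduct_sum, dotProduct_smul]
  rw [Finset.sum_congr rfl fun i hi => congrArg _ (hw i (Finset.mem_range.mp hi))]
  simp [Finset.mem_range.mpr (show n - 1 < n by omega)]

theorem eq_zero_of_vecMul_aeval_eq_zero {q : K[X]} (hq : q.degree < n)
    (hqA : w ᵥ* aeval A q = 0) : q = 0 := by
  by_contra hq0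
  have hlt : q.natDegree < n := (natDegree_lt_iff_degree_lt hq0).mpr hq
  set m := n - 1 - q.natDegree
  have hdeg : (X ^ m * q).natDegree < n := by
    grw [natDegree_mul_le, natDegree_X_pow_le]; omega
  have hcoeff : (X ^ m * q).coeff (n - 1) = q.leadingCoeff := by
    rw [show n - 1 = q.natDegree + m by omega, coeff_X_pow_mul]; rfl
  have hshift : w ⬝ᵥ aeval A (X ^ m * q) *ᵥ b = 0 := by
    rw [mul_comm, map_mul, ← mulVec_mulVec, dotProduct_mulVec, hqA, zero_dotProduct]
  rw [dotProduct_aeval_mulVec hw hdeg, hcoeff, leadingCoeff_eq_zero] at hshift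
  exact hq0 hshift

theorem charpoly_sub_vecMulVec_vecMul_aeval [Nontrivial K] {p : K[X]} (hp : p.Monic)
    (hpn : p.natDegree = n) :
    (A - vecMulVec b (w ᵥ* aeval A p)).charpoly = p := by
  set M := A - vecMulVec b (w ᵥ* aeval A p)
  have hχ : M.charpoly.natDegree = n := by simp [M]
  have hχ1 : M.charpoly.coeff n = 1 :=
    (congrArg M.charpoly.coeff hχ).symm.trans M.charpoly_monic.coeff_natDegree
  have hχA : w ᵥ* aeval A M.charpoly = w ᵥ* aeval A p := by
    have := vecMul_aeval_sub_vecMulVec hw (w ᵥ* aeval A p) hχ.le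
    rwa [aeval_self_charpoly, vecMul_zero, hχ1, one_smul, eq_comm, sub_eq_zero] at this
  have hdeg : (M.charpoly - p).degree < n := by
    have hχp : M.charpoly.degree = p.degree := by
      rw [degree_eq_natDegree M.charpoly_monic.ne_zero, degree_eq_natDegree hp.ne_zero, hχ, hpn]
    calc (M.charpoly - p).degree < M.charpoly.degree :=
          degree_sub_lt_left hχp M.charpoly_monic.ne_zero (by rw [M.charpoly_monic, hp])
      _ = n := by simp [M]
  refine sub_eq_zero.mp (eq_zero_of_vecMul_aeval_eq_zero hw hdeg ?_)
  rw [map_sub, vecMul_sub, hχA, sub_self]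

end Matrix

theorem ackermann_formula_general {n : ℕ}
    (A : Matrix (Fin n) (Fin n) ℂ) (b : Fin n → ℂ)
    (R : Matrix (Fin n) (Fin n) ℂ)
    (hR : R = Matrix.of fun (i j : Fin n) => ((A ^ (j : ℕ)) *ᵥ b) i)
    (hreach : IsUnit R)
    (p : Polynomial ℂ) (hmonic : p.Monic) (hdeg : p.natDegree = n)
    (e : Matrix (Fin 1) (Fin n) ℂ)
    (he : e = Matrix.of fun (_ : Fin 1) (j : Fin n) => if (j : ℕ) = n - 1 then (1 : ℂ) else 0)
    (f : Matrix (Fin 1) (Fin n) ℂ)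
    (hf : f = e * R⁻¹ * (Polynomial.aeval A p))
    (bcol : Matrix (Fin n) (Fin 1) ℂ)
    (hb : bcol = Matrix.of fun i _ => b i) :
    (A - bcol * f).charpoly = p := by
  set w : Fin n → ℂ := (e * R⁻¹) 0
  have hwR : w ᵥ* R = e 0 := by
    rw [← mul_apply_eq_vecMul, Matrix.mul_assoc,
      nonsing_inv_mul R (R.isUnit_iff_isUnit_det.mp hreach), Matrix.mul_one]
  have hw : ∀ k < n, w ⬝ᵥ A ^ k *ᵥ b = if k = n - 1 then 1 else 0 := fun k hk => by
    subst hR he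
    exact congrFun hwR ⟨k, hk⟩
  have hbf : bcol * f = vecMulVec b (w ᵥ* aeval A p) := by
    ext i j
    simp [hb, hf, mul_apply, vecMulVec_apply, w, ← mul_apply_eq_vecMul]
  rw [hbf]
  exact charpoly_sub_vecMulVec_vecMul_aeval hw hmonic hdeg

/-- Ackermann's formula: for a reachable single-input pair `(A, b)` and a monic
polynomial `p` of degree `n`, the feedback row `f = (0,…,0,1) R(A,b)⁻¹ p(A)`,
with `R(A,b) = (b, Ab, …, A^{n−1}b)`, satisfies `det(zI − A + b f) = p(z)`,
i.e. the characteristic polynomial of `A − b f` is `p`. -/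
theorem ackermann_formula {n : ℕ} (hn : 0 < n)
    (A : Matrix (Fin n) (Fin n) ℂ) (b : Fin n → ℂ)
    (R : Matrix (Fin n) (Fin n) ℂ)
    (hR : R = Matrix.of fun (i j : Fin n) => ((A ^ (j : ℕ)) *ᵥ b) i)
    (hreach : IsUnit R)
    (p : Polynomial ℂ) (hmonic : p.Monic) (hdeg : p.natDegree = n)
    (e : Matrix (Fin 1) (Fin n) ℂ)
    (he : e = Matrix.of fun (_ : Fin 1) (j : Fin n) => if (j : ℕ) = n - 1 then (1 : ℂ) else 0)
    (f : Matrix (Fin 1) (Fin n) ℂ)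
    (hf : f = e * R⁻¹ * (Polynomial.aeval A p))
    (bcol : Matrix (Fin n) (Fin 1) ℂ)
    (hb : bcol = Matrix.of fun i _ => b i) :
    (A - bcol * f).charpoly = p :=
  ackermann_formula_general A b R hR hreach p hmonic hdeg e he f hf bcol hb
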